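/- Let $L: \mathcal{Y} \times \mathbb{R} \to \mathbb{R}_+$ be $M_L$-Lipschitz in its second argument and $f: \mathbb{R}^d \to \mathbb{R}$ be $M_f$-Lipschitz. Suppose the target joint distribution satisfies $\mathcal{P}_t = m_\# \mathcal{P}_s$ with $m(x,y) = (T(x), y)$ for a measurable map $T: \mathbb{R}^d \to \mathbb{R}^d$, and let $\hat T(x) = \hat m_2 + \hat A(x - \hat m_1)$ with $\hat A$ invertible. Then $R_t(f \circ \hat T^{-1}) \leq R_s(f) + M_f M_L \, \mathbb{E}_{(X,Y) \sim \mathcal{P}_s}\left[\|\hat T^{-1}(T(X)) - \hat T^{-1}(\hat T(X))\|\right]$. -/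

import Mathlib

open Matrix MeasureTheory

/-- The symmetric positive semidefinite square root of a matrix (zero if the
matrix is not positive semidefinite). -/
noncomputable def msqrt {d : ℕ} (A : Matrix (Fin d) (Fin d) ℝ) : Matrix (Fin d) (Fin d) ℝ :=
  open scoped Classical in
  if h : A.PosSemidef then (h.1.eigenvectorUnitary : Matrix (Fin d) (Fin d) ℝ) *
    diagonal ((↑) ∘ (√·) ∘ h.1.eigenvalues) * (star h.1.eigenvectorUnitary : Matrix (Fin d) (Fin d) ℝ)
    else 0

/-- The operator (spectral) norm of a matrix, as the norm of the induced map on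
Euclidean space. -/
noncomputable def opNorm {d : ℕ} (A : Matrix (Fin d) (Fin d) ℝ) : ℝ :=
  ‖LinearMap.toContinuousLinearMap (Matrix.toEuclideanLin A)‖

/-- The smallest eigenvalue of a symmetric matrix (zero if not symmetric). -/
noncomputable def lamMin {d : ℕ} (A : Matrix (Fin d) (Fin d) ℝ) : ℝ :=
  open scoped Classical in
  if h : A.IsHermitian then ⨅ i, h.eigenvalues i else 0

/-- Interpret a plain vector as a point of Euclidean space. -/
noncomputable def toE {d : ℕ} (v : Fin d → ℝ) : EuclideanSpace ℝ (Fin d) :=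
  (WithLp.equiv 2 (Fin d → ℝ)).symm v

/-- The matrix geometric mean `B # C = B^{1/2} (B^{-1/2} C B^{-1/2})^{1/2} B^{1/2}`. -/
noncomputable def gmean {d : ℕ} (B C : Matrix (Fin d) (Fin d) ℝ) : Matrix (Fin d) (Fin d) ℝ :=
  msqrt B * msqrt ((msqrt B)⁻¹ * C * (msqrt B)⁻¹) * msqrt B


/-- Interpret a point of Euclidean space as a plain vector. -/
noncomputable def fromE {d : ℕ} (v : EuclideanSpace ℝ (Fin d)) : Fin d → ℝ :=
  WithLp.equiv 2 (Fin d → ℝ) v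
theorem otda_risk_bound {d : ℕ} {Y : Type*} [MeasurableSpace Y]
    (Ps Pt : Measure (EuclideanSpace ℝ (Fin d) × Y)) [IsProbabilityMeasure Ps]
    (L : Y → ℝ → ℝ) (hLpos : ∀ y t, 0 ≤ L y t)
    (ML Mf : NNReal) (hL : ∀ y, LipschitzWith ML (L y))
    (f : EuclideanSpace ℝ (Fin d) → ℝ) (hf : LipschitzWith Mf f)
    (T : EuclideanSpace ℝ (Fin d) → EuclideanSpace ℝ (Fin d)) (hTmeas : Measurable T)
    (hPt : Pt = Ps.map fun p => (T p.1, p.2))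
    (mh1 mh2 : EuclideanSpace ℝ (Fin d)) (Ah : Matrix (Fin d) (Fin d) ℝ)
    (hAh : IsUnit Ah)
    (Th Thinv : EuclideanSpace ℝ (Fin d) → EuclideanSpace ℝ (Fin d))
    (hTh : Th = fun x => mh2 + toE (Ah.mulVec (fromE (x - mh1))))
    (hThinv : Thinv = fun z => mh1 + toE (Ah⁻¹.mulVec (fromE (z - mh2))))
    (hint1 : Integrable (fun p => L p.2 (f p.1)) Ps)
    (hint2 : Integrable (fun p => ‖Thinv (T p.1) - Thinv (Th p.1)‖) Ps) :
    (∫ p, L p.2 (f (Thinv p.1)) ∂Pt) ≤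
      (∫ p, L p.2 (f p.1) ∂Ps) +
        (Mf : ℝ) * (ML : ℝ) * ∫ p, ‖Thinv (T p.1) - Thinv (Th p.1)‖ ∂Ps := by

  have hAdet : IsUnit Ah.det := (Matrix.isUnit_iff_isUnit_det Ah).mp hAh
  have hinv : ∀ x : EuclideanSpace ℝ (Fin d), Thinv (Th x) = x := by
    intro x
    simp only [hTh, hThinv, add_sub_cancel_left]
    simp [toE, fromE, Matrix.mulVec_mulVec, Matrix.nonsing_inv_mul Ah hAdet,
      Matrix.one_mulVec]
  have hm : Measurable (fun p : EuclideanSpace ℝ (Fin d) × Y => (T p.1, p.2)) :=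
    (hTmeas.comp measurable_fst).prodMk measurable_snd
  subst hPt
  have hbound : ∀ p : EuclideanSpace ℝ (Fin d) × Y,
      L p.2 (f (Thinv (T p.1))) ≤
        L p.2 (f p.1) + (Mf : ℝ) * (ML : ℝ) * ‖Thinv (T p.1) - Thinv (Th p.1)‖ := by
    intro p
    have h1 := (hL p.2).dist_le_mul (f (Thinv (T p.1))) (f (Thinv (Th p.1)))
    have h2 := hf.dist_le_mul (Thinv (T p.1)) (Thinv (Th p.1))
    have h3 := hinv p.1
    simp only [dist_eq_norm, Real.norm_eq_abs] at h1 h2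
    rw [h3] at h1 h2 ⊢
    have hML : (0:ℝ) ≤ ML := ML.coe_nonneg
    have h4 := (abs_le.mp h1).2
    have h5 := (abs_le.mp h2).2
    have h6 := abs_nonneg (f (Thinv (T p.1)) - f p.1)
    have h7 := (abs_le.mp h2).1
    nlinarith [abs_nonneg (L p.2 (f (Thinv (T p.1))) - L p.2 (f p.1))]
  by_cases hG : Integrable (fun p => L p.2 (f (Thinv p.1)))
      (Ps.map fun p => (T p.1, p.2))
  · rw [integral_map hm.aemeasurable hG.aestronglyMeasurable]
    have hRint : Integrable (fun p => L p.2 (f p.1) +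
        (Mf : ℝ) * (ML : ℝ) * ‖Thinv (T p.1) - Thinv (Th p.1)‖) Ps :=
      hint1.add (hint2.const_mul _)
    calc (∫ p, L p.2 (f (Thinv (T p.1))) ∂Ps)
        ≤ ∫ p, (L p.2 (f p.1) +
            (Mf : ℝ) * (ML : ℝ) * ‖Thinv (T p.1) - Thinv (Th p.1)‖) ∂Ps := by
          refine integral_mono_of_nonneg ?_ hRint ?_
          · exact Filter.Eventually.of_forall fun p => hLpos _ _
          · exact Filter.Eventually.of_forall hbound
      _ = (∫ p, L p.2 (f p.1) ∂Ps) +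
            (Mf : ℝ) * (ML : ℝ) * ∫ p, ‖Thinv (T p.1) - Thinv (Th p.1)‖ ∂Ps := by
          rw [integral_add hint1 (hint2.const_mul _), integral_const_mul]
  · rw [integral_undef hG]
    have h1 : 0 ≤ ∫ p, L p.2 (f p.1) ∂Ps :=
      integral_nonneg fun p => hLpos _ _
    have h2 : 0 ≤ ∫ p, ‖Thinv (T p.1) - Thinv (Th p.1)‖ ∂Ps :=
      integral_nonneg fun p => norm_nonneg _
    have : (0:ℝ) ≤ (Mf : ℝ) * (ML : ℝ) := by positivity
    nlinarith
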